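/- arXiv:2411.05255 — 3 statements merged into one kernel-verified Lean document; each statement's English description precedes it below -/
import Mathlib

section
/- Let f : 2^V → ℝ≥0 be a monotone submodular function with f(∅) = 0 on a finite set V, and let T = {t_1, …, t_k} ⊆ V be ordered so that f({t_1}) ≤ f({t_2}) ≤ … ≤ f({t_k}). Let OPT = min { ∑_{i=1}^k f(V_i) : V_1,…,V_k partition V and t_i ∈ V_i for all i }. Then f((V \ T) ∪ {t_k}) + ∑_{i=1}^{k-1} f({t_i}) ≤ (2 - 1/k)·OPT. -/
open Finset

/-! Both parts of the left side are bounded by `OPT = ∑ f(Pᵢ)`: the first by monotonicity and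
subadditivity, `f((V \ T) ∪ {t_k}) ≤ f(V) ≤ ∑ f(Pᵢ)`, and `∑ f({tᵢ})` because `tᵢ ∈ Pᵢ`. Since `t_k` has
the largest singleton value, dropping it from `∑ f({tᵢ})` keeps at most a `1 - 1/k` fraction. -/

theorem le_sum_biUnion_of_submodular {V ι : Type*} [DecidableEq V] [DecidableEq ι]
    (f : Finset V → ℝ) (hnn : ∀ S, 0 ≤ f S)
    (hsub : ∀ A B : Finset V, f (A ∩ B) + f (A ∪ B) ≤ f A + f B) (hempty : f ∅ = 0)
    (s : Finset ι) (Q : ι → Finset V) :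
    f (s.biUnion Q) ≤ ∑ i ∈ s, f (Q i) := by
  induction s using Finset.induction_on with
  | empty => simp [hempty]
  | insert a s ha ih =>
    rw [biUnion_insert, sum_insert ha]
    linarith [hsub (Q a) (s.biUnion Q), hnn (Q a ∩ s.biUnion Q)]

theorem sum_erase_le_of_forall_le {ι : Type*} [DecidableEq ι] {s : Finset ι} {x : ι → ℝ}
    {j : ι} (hj : j ∈ s) (hmax : ∀ i ∈ s, x i ≤ x j) :
    ∑ i ∈ s.erase j, x i ≤ (1 - 1 / (#s : ℝ)) * ∑ i ∈ s, x i := by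
  have hcard : (#(s.erase j) : ℝ) = #s - 1 := by
    rw [card_erase_of_mem hj, Nat.cast_pred (card_pos.2 ⟨j, hj⟩)]
  have hbound : ∑ i ∈ s.erase j, x i ≤ #(s.erase j) • x j :=
    sum_le_card_nsmul _ _ _ fun i hi => hmax i (mem_of_mem_erase hi)
  have hpos : (0 : ℝ) < #s := Nat.cast_pos.2 (card_pos.2 ⟨j, hj⟩)
  rw [nsmul_eq_mul, hcard] at hbound
  rw [← sum_erase_add _ _ hj, one_sub_div hpos.ne', div_mul_eq_mul_div, le_div_iff₀ hpos]
  linarith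

theorem monosubmp_easy_approx_general {V : Type*} [Fintype V] [DecidableEq V]
    (k : ℕ) (hk : 0 < k)
    (f : Finset V → ℝ)
    (hnn : ∀ S, 0 ≤ f S)
    (hmono : ∀ A B : Finset V, A ⊆ B → f A ≤ f B)
    (hsub : ∀ A B : Finset V, f (A ∩ B) + f (A ∪ B) ≤ f A + f B)
    (hempty : f ∅ = 0)
    (t : Fin k → V)
    (hsorted : ∀ i j : Fin k, i ≤ j → f {t i} ≤ f {t j})
    (P : Fin k → Finset V)
    (hcover : Finset.univ.biUnion P = Finset.univ)
    (hti : ∀ i, t i ∈ P i) :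
    f ((Finset.univ \ Finset.image t Finset.univ) ∪
        {t ⟨k - 1, Nat.sub_lt hk Nat.one_pos⟩})
      + ∑ i ∈ Finset.univ.filter
          (fun i => i ≠ (⟨k - 1, Nat.sub_lt hk Nat.one_pos⟩ : Fin k)), f {t i}
    ≤ (2 - 1 / (k : ℝ)) * ∑ i, f (P i) := by
  set last : Fin k := ⟨k - 1, Nat.sub_lt hk Nat.one_pos⟩
  have hlast : ∀ i, i ≤ last := fun i => Fin.le_def.2 (Nat.le_pred_of_lt i.2)
  have hbig : f ((univ \ image t univ) ∪ {t last}) ≤ ∑ i, f (P i) :=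
    (hmono _ _ (subset_univ _)).trans
      (hcover ▸ le_sum_biUnion_of_submodular f hnn hsub hempty univ P)
  have hsingle : ∑ i, f {t i} ≤ ∑ i, f (P i) :=
    sum_le_sum fun i _ => hmono _ _ (singleton_subset_iff.2 (hti i))
  have hdrop := sum_erase_le_of_forall_le (mem_univ last) fun i _ => hsorted i last (hlast i)
  rw [card_univ, Fintype.card_fin] at hdrop
  have hfrac : 0 ≤ 1 - 1 / (k : ℝ) :=
    sub_nonneg.2 (div_le_one_of_le₀ (Nat.one_le_cast.2 hk) (Nat.cast_nonneg k))
  rw [filter_ne']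
  linarith [mul_le_mul_of_nonneg_left hsingle hfrac]

theorem monosubmp_easy_approx {V : Type*} [Fintype V] [DecidableEq V]
    (k : ℕ) (hk : 0 < k)
    (f : Finset V → ℝ)
    (hnn : ∀ S, 0 ≤ f S)
    (hmono : ∀ A B : Finset V, A ⊆ B → f A ≤ f B)
    (hsub : ∀ A B : Finset V, f (A ∩ B) + f (A ∪ B) ≤ f A + f B)
    (hempty : f ∅ = 0)
    (t : Fin k → V) (ht : Function.Injective t)
    (hsorted : ∀ i j : Fin k, i ≤ j → f {t i} ≤ f {t j})
    (P : Fin k → Finset V)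
    (hdisj : ∀ i j, i ≠ j → Disjoint (P i) (P j))
    (hcover : Finset.univ.biUnion P = Finset.univ)
    (hti : ∀ i, t i ∈ P i) :
    f ((Finset.univ \ Finset.image t Finset.univ) ∪
        {t ⟨k - 1, Nat.sub_lt hk Nat.one_pos⟩})
      + ∑ i ∈ Finset.univ.filter
          (fun i => i ≠ (⟨k - 1, Nat.sub_lt hk Nat.one_pos⟩ : Fin k)), f {t i}
    ≤ (2 - 1 / (k : ℝ)) * ∑ i, f (P i) :=
  monosubmp_easy_approx_general k hk f hnn hmono hsub hempty t hsorted P hcover hti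
end

section
/- Let k ≥ 4, V = [k] × [k], R_i = {(i,j) : j ∈ [k]}, C_j = {(i,j) : i ∈ [k]}, φ_n(a) = min(a, 7k/8), φ_t(a) = min(3ka/8, 3k/8 + a − 1, 7k/8). Define g(S) = φ_t(|S|) if S contains some diagonal element (ℓ,ℓ), and g(S) = φ_n(|S|) otherwise, and f(S) = ∑_{i=1}^k (g(R_i ∩ S) + g(C_i ∩ S)). Then f is a nonnegative, monotone, submodular function on 2^V. -/
/-!
Write `c = 3k/8 - 1 ≥ 0` and `M = 7k/8`. A set containing a diagonal cell has at least one
element, and for `a ≥ 1` the first term of `φ_t` is never the minimum, so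
`g S = min (|S| + c·[S meets the diagonal]) M`. The quantity inside the minimum is a sum of the
modular function `|S|` and a nonnegative multiple of a coverage indicator, hence monotone and
submodular; truncating a monotone submodular function at a constant keeps it monotone and
submodular. Finally `f` is a sum of such functions precomposed with the lattice homomorphisms
`S ↦ S ∩ R_i` and `S ↦ S ∩ C_i`.
-/

open Finset

def IsSubmodular {α : Type*} [Lattice α] (f : α → ℝ) : Prop :=
  ∀ a b, f (a ⊓ b) + f (a ⊔ b) ≤ f a + f b

namespace IsSubmodular

variable {α β : Type*} [Lattice α] [Lattice β] {f g : α → ℝ}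

theorem add (hf : IsSubmodular f) (hg : IsSubmodular g) : IsSubmodular (f + g) := fun a b => by
  simp only [Pi.add_apply]
  linarith [hf a b, hg a b]

theorem const_mul (hf : IsSubmodular f) {c : ℝ} (hc : 0 ≤ c) :
    IsSubmodular fun a => c * f a := fun a b => by
  nlinarith [hf a b]

theorem sum {ι : Type*} {s : Finset ι} {f : ι → α → ℝ} (hf : ∀ i ∈ s, IsSubmodular (f i)) :
    IsSubmodular fun a => ∑ i ∈ s, f i a := fun a b => by
  rw [← sum_add_distrib, ← sum_add_distrib]
  exact sum_le_sum fun i hi => hf i hi a b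

theorem comp {f : β → ℝ} (hf : IsSubmodular f) (φ : LatticeHom α β) : IsSubmodular (f ∘ φ) :=
  fun a b => by simpa only [Function.comp_apply, map_inf, map_sup] using hf (φ a) (φ b)

/-- If one of `f a`, `f b` reaches `M`, so does `f (a ⊔ b)` and the inequality reduces to
monotonicity on `a ⊓ b ≤ b` (or `≤ a`); otherwise no value on the right is truncated. -/
theorem min_const (hmono : Monotone f) (hf : IsSubmodular f) (M : ℝ) :
    IsSubmodular fun a => min (f a) M := fun a b => by
  have hinf_a := hmono (inf_le_left : a ⊓ b ≤ a)
  have hinf_b := hmono (inf_le_right : a ⊓ b ≤ b)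
  have hsup_a := hmono (le_sup_left : a ≤ a ⊔ b)
  have hsup_b := hmono (le_sup_right : b ≤ a ⊔ b)
  have hab := hf a b
  simp only [min_def]
  split_ifs <;> linarith

end IsSubmodular

theorem isSubmodular_card {α : Type*} [DecidableEq α] :
    IsSubmodular fun s : Finset α => (#s : ℝ) := fun s t => by
  show (#(s ∩ t) : ℝ) + #(s ∪ t) ≤ #s + #t
  exact_mod_cast (card_inter_add_card_union s t).le

section Indicator

variable {α : Type*} [Lattice α] {P : α → Prop} [DecidablePred P]

theorem monotone_ite_one_zero (hP : ∀ ⦃a b⦄, a ≤ b → P a → P b) :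
    Monotone fun a => if P a then (1 : ℝ) else 0 := fun a b hab => by
  by_cases ha : P a
  · simp [ha, hP hab ha]
  · simp only [ha, if_false]
    split_ifs <;> norm_num

theorem isSubmodular_ite_one_zero (hP : ∀ ⦃a b⦄, a ≤ b → P a → P b)
    (hsup : ∀ a b, P (a ⊔ b) → P a ∨ P b) :
    IsSubmodular fun a => if P a then (1 : ℝ) else 0 := fun a b => by
  by_cases hinf : P (a ⊓ b)
  · simp [hinf, hP inf_le_left hinf, hP inf_le_right hinf,
      hP (inf_le_left.trans le_sup_left) hinf]
  · have := hsup a b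
    simp only [hinf, if_false, zero_add]
    split_ifs <;> simp_all

end Indicator

def Finset.filterLatticeHom {α : Type*} [DecidableEq α] (p : α → Prop) [DecidablePred p] :
    LatticeHom (Finset α) (Finset α) where
  toFun s := s.filter p
  map_sup' := filter_union p
  map_inf' := filter_inter_distrib p

theorem exists_mem_of_le_of_exists_mem {α ι : Type*} (q : ι → α) ⦃s t : Finset α⦄
    (hst : s ≤ t) : (∃ i, q i ∈ s) → ∃ i, q i ∈ t :=
  fun ⟨i, hi⟩ => ⟨i, hst hi⟩

section CappedCardWithBonus

variable {α ι : Type*} [DecidableEq α] (q : ι → α)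
  [DecidablePred fun s : Finset α => ∃ i, q i ∈ s] {c : ℝ}

theorem monotone_card_add_mul_ite_exists_mem (hc : 0 ≤ c) :
    Monotone fun s : Finset α => (#s : ℝ) + c * if ∃ i, q i ∈ s then 1 else 0 :=
  (Nat.mono_cast.comp card_mono).add
    ((monotone_ite_one_zero (exists_mem_of_le_of_exists_mem q)).const_mul hc)

theorem monotone_min_card_add_mul_ite_exists_mem (hc : 0 ≤ c) (M : ℝ) :
    Monotone fun s : Finset α => min ((#s : ℝ) + c * if ∃ i, q i ∈ s then 1 else 0) M :=
  fun _ _ hst => min_le_min_right _ (monotone_card_add_mul_ite_exists_mem q hc hst)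

theorem isSubmodular_min_card_add_mul_ite_exists_mem (hc : 0 ≤ c) (M : ℝ) :
    IsSubmodular fun s : Finset α => min ((#s : ℝ) + c * if ∃ i, q i ∈ s then 1 else 0) M := by
  have hsup : ∀ s t : Finset α, (∃ i, q i ∈ s ⊔ t) → (∃ i, q i ∈ s) ∨ ∃ i, q i ∈ t := by
    simp only [sup_eq_union, mem_union, exists_or, imp_self, implies_true]
  exact (isSubmodular_card.add ((isSubmodular_ite_one_zero
    (exists_mem_of_le_of_exists_mem q) hsup).const_mul hc)).min_const
    (monotone_card_add_mul_ite_exists_mem q hc) M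

end CappedCardWithBonus

theorem min_mul_min_eq_min_add_sub_one {c a M : ℝ} (hc : 1 ≤ c) (ha : 1 ≤ a) :
    min (c * a) (min (c + a - 1) M) = min (c + a - 1) M :=
  min_eq_right ((min_le_left _ _).trans (by nlinarith))

theorem symgap_g_eq_min (k : ℕ) (hk : 4 ≤ k)
    (φn : ℤ → ℝ) (hφn : ∀ a : ℤ, φn a = min (a : ℝ) (7 / 8 * k))
    (φt : ℤ → ℝ)
    (hφt : ∀ a : ℤ, φt a = min (3 / 8 * (k : ℝ) * a) (min (3 / 8 * k + a - 1) (7 / 8 * k)))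
    (g : Finset (Fin k × Fin k) → ℝ)
    (hg : ∀ S : Finset (Fin k × Fin k),
      g S = if ∃ ℓ : Fin k, (ℓ, ℓ) ∈ S then φt S.card else φn S.card)
    (S : Finset (Fin k × Fin k)) :
    g S = min ((#S : ℝ) + (3 / 8 * k - 1) * if ∃ ℓ : Fin k, (ℓ, ℓ) ∈ S then 1 else 0)
      (7 / 8 * k) := by
  rw [hg S]
  split_ifs with hS
  · obtain ⟨ℓ, hℓ⟩ := hS
    have hcard : (1 : ℝ) ≤ #S := by exact_mod_cast card_pos.mpr ⟨_, hℓ⟩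
    have hk' : (4 : ℝ) ≤ k := by exact_mod_cast hk
    rw [hφt, Int.cast_natCast, min_mul_min_eq_min_add_sub_one (by linarith) hcard]
    ring_nf
  · rw [hφn, Int.cast_natCast, mul_zero, add_zero]

theorem symgap_function_monotone_submodular (k : ℕ) (hk : 4 ≤ k)
    (φn : ℤ → ℝ) (hφn : ∀ a : ℤ, φn a = min (a : ℝ) (7 / 8 * k))
    (φt : ℤ → ℝ)
    (hφt : ∀ a : ℤ, φt a = min (3 / 8 * (k : ℝ) * a) (min (3 / 8 * k + a - 1) (7 / 8 * k)))
    (g : Finset (Fin k × Fin k) → ℝ)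
    (hg : ∀ S : Finset (Fin k × Fin k),
      g S = if ∃ ℓ : Fin k, (ℓ, ℓ) ∈ S then φt S.card else φn S.card)
    (f : Finset (Fin k × Fin k) → ℝ)
    (hf : ∀ S : Finset (Fin k × Fin k),
      f S = ∑ i : Fin k,
        (g (S.filter (fun p => p.1 = i)) + g (S.filter (fun p => p.2 = i)))) :
    (∀ S, 0 ≤ f S) ∧
    (∀ A B : Finset (Fin k × Fin k), A ⊆ B → f A ≤ f B) ∧
    (∀ A B : Finset (Fin k × Fin k), f (A ∩ B) + f (A ∪ B) ≤ f A + f B) := by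
  have hc : (0 : ℝ) ≤ 3 / 8 * k - 1 := by
    have : (4 : ℝ) ≤ k := by exact_mod_cast hk
    linarith
  have hg_eq : g = fun S => min ((#S : ℝ) + (3 / 8 * k - 1) *
      if ∃ ℓ : Fin k, (ℓ, ℓ) ∈ S then 1 else 0) (7 / 8 * k) :=
    funext (symgap_g_eq_min k hk φn hφn φt hφt g hg)
  have hg_mono : Monotone g := hg_eq ▸ monotone_min_card_add_mul_ite_exists_mem _ hc _
  have hg_sub : IsSubmodular g := hg_eq ▸ isSubmodular_min_card_add_mul_ite_exists_mem _ hc _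
  have hg_nonneg : ∀ S, 0 ≤ g S := fun S => by rw [hg_eq]; positivity
  have hf_eq : f = fun S => ∑ i, ((g ∘ filterLatticeHom (·.1 = i)) S +
      (g ∘ filterLatticeHom (·.2 = i)) S) := funext hf
  refine ⟨fun S => ?_, fun A B hAB => ?_, ?_⟩
  · rw [hf]
    exact sum_nonneg fun i _ => add_nonneg (hg_nonneg _) (hg_nonneg _)
  · rw [hf, hf]
    exact sum_le_sum fun i _ => add_le_add
      (hg_mono (filter_subset_filter _ hAB)) (hg_mono (filter_subset_filter _ hAB))
  · rw [hf_eq]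
    exact IsSubmodular.sum fun i _ => (hg_sub.comp _).add (hg_sub.comp _)
end

section
/- Suppose OPT_MWC and OPT_GCOV denote the optimum values of graph multiway cut and graph coverage multiway partition on the same weighted graph instance, so that OPT_GCOV = OPT_MWC + W where W = ∑_{e∈E} w_e and OPT_MWC ≤ W. If a partition S_1,…,S_k satisfies (1/2)∑_i d(S_i) ≤ α·OPT_MWC for some α ≥ 1, then ∑_i b(S_i) ≤ ((α+1)/2)·OPT_GCOV. -/
theorem mwc_to_gcov_approx (OPTmwc OPTgcov W α C B : ℝ)
    (h1 : OPTgcov = OPTmwc + W)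
    (h2 : OPTmwc ≤ W)
    (h3 : B = C + W)
    (h4 : C ≤ α * OPTmwc)
    (h5 : 1 ≤ α) :
    B ≤ ((α + 1) / 2) * OPTgcov := by
  calc B = C + W := h3
    _ ≤ α * OPTmwc + W := by linarith
    _ = (α + 1) / 2 * OPTgcov - (α - 1) / 2 * (W - OPTmwc) := by rw [h1]; ring
    _ ≤ (α + 1) / 2 * OPTgcov :=
      sub_le_self _ (mul_nonneg (by linarith) (sub_nonneg.mpr h2))
end
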